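/- arXiv:1902.08170 — 4 statements merged into one kernel-verified Lean document; each statement's English description precedes it below -/
import Mathlib

section
/- Let F(R) := ∫_R^1 e^t/t² dt for R ∈ (0,1) and r(R) := 1/F(R). Then there exists δ > 0 such that the function R ↦ ( r(R) − R − R² log R ) / R² is bounded on (0,δ). (In the paper's notation: r = R + R² log R + O(R²) as R → 0⁺; in particular the coordinate transformation is polyhomogeneous, not smooth, at R = 0.) -/
/-!
Subtracting the Laurent part `t⁻² + t⁻¹` of the integrand leaves `(eᵗ - 1 - t)/t²`, which is
bounded by `1` on `[-1, 1]`; hence `F(R) = R⁻¹ - log R + E` with `|E| ≤ 2`. Writing `L = log R`,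
`F · (R + R²L) = 1 - R²L² + RE(1 + RL)`, and since `R L²` and `R L` stay bounded on `(0, 1]`,
`r - R - R²L = (R²L² - RE(1 + RL)) / F = O(R) · O(R) = O(R²)`.
-/

open Real intervalIntegral Set MeasureTheory

lemma abs_exp_sub_one_sub_id_div_sq_le_one {t : ℝ} (ht : |t| ≤ 1) :
    |(exp t - 1 - t) / t ^ 2| ≤ 1 := by
  rw [abs_div, abs_sq]
  exact div_le_one_of_le₀ (abs_exp_sub_one_sub_id_le ht) (sq_nonneg t)

lemma abs_integral_exp_sub_one_sub_id_div_sq_le {a b : ℝ} (ha : |a| ≤ 1) (hb : |b| ≤ 1) :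
    |∫ t in a..b, (exp t - 1 - t) / t ^ 2| ≤ |b - a| := by
  have hbound : ∀ t ∈ uIoc a b, ‖(exp t - 1 - t) / t ^ 2‖ ≤ 1 := fun t ht ↦
    abs_exp_sub_one_sub_id_div_sq_le_one <| abs_le.mpr <|
      uIcc_subset_Icc (abs_le.mp ha) (abs_le.mp hb) (uIoc_subset_uIcc ht)
  simpa [abs_sub_comm] using norm_integral_le_of_norm_le_const hbound

lemma integral_exp_div_sq_eq {a b : ℝ} (h : (0 : ℝ) ∉ uIcc a b) :
    ∫ t in a..b, exp t / t ^ 2 =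
      a⁻¹ - b⁻¹ + log (b / a) + ∫ t in a..b, (exp t - 1 - t) / t ^ 2 := by
  have hzpow : IntervalIntegrable (fun t : ℝ ↦ t ^ (-2 : ℤ)) volume a b :=
    intervalIntegrable_zpow (Or.inr h)
  have hinv : IntervalIntegrable (fun t : ℝ ↦ t⁻¹) volume a b :=
    intervalIntegrable_inv (fun t ht ↦ ne_of_mem_of_not_mem ht h) continuousOn_id
  have hrem : IntervalIntegrable (fun t : ℝ ↦ (exp t - 1 - t) / t ^ 2) volume a b :=
    (ContinuousOn.div (by fun_prop) (by fun_prop)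
      fun t ht ↦ pow_ne_zero 2 (ne_of_mem_of_not_mem ht h)).intervalIntegrable
  have hsplit : EqOn (fun t ↦ exp t / t ^ 2)
      (fun t ↦ t ^ (-2 : ℤ) + (t⁻¹ + (exp t - 1 - t) / t ^ 2)) (uIcc a b) := by
    intro t ht
    have : t ≠ 0 := ne_of_mem_of_not_mem ht h
    simp only [zpow_neg]
    field_simp
    ring
  rw [integral_congr hsplit, integral_add hzpow (hinv.add hrem), integral_add hinv hrem,
    integral_zpow (Or.inr ⟨by norm_num, h⟩), integral_inv h]
  norm_num
  ring

lemma abs_integral_exp_div_sq_sub_le {R : ℝ} (hR0 : 0 < R) (hR1 : R ≤ 1) :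
    |(∫ t in R..1, exp t / t ^ 2) - (R⁻¹ - log R)| ≤ 2 := by
  have hzero : (0 : ℝ) ∉ uIcc R 1 := by
    rw [uIcc_of_le hR1]
    exact fun h ↦ hR0.not_ge h.1
  have hrem := abs_integral_exp_sub_one_sub_id_div_sq_le (a := R) (b := 1)
    (by rw [abs_of_pos hR0]; exact hR1) (by norm_num)
  rw [abs_of_nonneg (sub_nonneg.mpr hR1)] at hrem
  rw [integral_exp_div_sq_eq hzero, one_div, log_inv, inv_one]
  calc _ = |(∫ t in R..1, (exp t - 1 - t) / t ^ 2) - 1| := by ring_nf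
    _ ≤ |∫ t in R..1, (exp t - 1 - t) / t ^ 2| + |1| := abs_sub _ _
    _ ≤ 2 := by rw [abs_one]; linarith

lemma Real.mul_log_sq_le_four {x : ℝ} (h0 : 0 < x) (h1 : x ≤ 1) : x * log x ^ 2 ≤ 4 := by
  have hs : |log √x * √x| < 1 := abs_log_mul_self_lt √x (sqrt_pos.mpr h0) (sqrt_le_one.mpr h1)
  have hx : x * log x ^ 2 = 4 * (log √x * √x) ^ 2 := by
    rw [log_sqrt h0.le, mul_pow, sq_sqrt h0.le]
    ring
  rw [hx, ← sq_abs]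
  nlinarith [abs_nonneg (log √x * √x)]

lemma Real.abs_one_add_mul_log_le_one {x : ℝ} (h0 : 0 < x) (h1 : x ≤ 1) :
    |1 + x * log x| ≤ 1 := by
  have hlt : |log x * x| < 1 := abs_log_mul_self_lt x h0 h1
  have hnonpos : x * log x ≤ 0 := mul_nonpos_of_nonneg_of_nonpos h0.le (log_nonpos h0.le h1)
  rw [mul_comm, abs_lt] at hlt
  rw [abs_le]
  constructor <;> linarith

lemma abs_inv_sub_sub_sq_mul_log_le {R F : ℝ} (hR0 : 0 < R) (hR : R ≤ 1 / 4)
    (hF : |F - (R⁻¹ - log R)| ≤ 2) : |F⁻¹ - R - R ^ 2 * log R| ≤ 12 * R ^ 2 := by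
  set L := log R
  set E := F - (R⁻¹ - L) with hE
  have hR1 : R ≤ 1 := by linarith
  have hL : L ≤ 0 := log_nonpos hR0.le hR1
  have hRinv : 4 ≤ R⁻¹ := by rw [le_inv_comm₀ (by norm_num) hR0]; linarith
  have hFlow : R⁻¹ / 2 ≤ F := by linarith [(abs_le.mp hF).1]
  have hFpos : 0 < F := by linarith
  have hidentity : F⁻¹ - R - R ^ 2 * L = (R ^ 2 * L ^ 2 - R * E * (1 + R * L)) / F := by
    rw [hE]
    field_simp
    ring
  have hnum : |R ^ 2 * L ^ 2 - R * E * (1 + R * L)| ≤ 6 * R := by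
    have h1 : R ^ 2 * L ^ 2 ≤ 4 * R := by nlinarith [mul_log_sq_le_four hR0 hR1]
    have h2 : |R * E * (1 + R * L)| ≤ R * 2 * 1 := by
      rw [abs_mul, abs_mul, abs_of_pos hR0]
      gcongr
      exact abs_one_add_mul_log_le_one hR0 hR1
    calc _ ≤ |R ^ 2 * L ^ 2| + |R * E * (1 + R * L)| := abs_sub _ _
      _ ≤ 6 * R := by rw [abs_of_nonneg (by positivity)]; linarith
  rw [hidentity, abs_div, abs_of_pos hFpos, div_le_iff₀ hFpos]
  calc _ ≤ 6 * R := hnum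
    _ = 12 * R ^ 2 * (R⁻¹ / 2) := by field_simp; ring
    _ ≤ 12 * R ^ 2 * F := by gcongr

/-- With `F(R) = ∫_R^1 e^t/t² dt` and `r(R) = 1/F(R)` on `(0,1)`, one has
`r = R + R² log R + O(R²)` as `R → 0⁺`: the quotient
`(r(R) − R − R² log R)/R²` is bounded on some `(0,δ)`. -/
theorem stmt_2
    (F : ℝ → ℝ) (hF : ∀ R, F R = ∫ t in R..(1:ℝ), Real.exp t / t ^ 2)
    (r : ℝ → ℝ) (hr : ∀ R, r R = (F R)⁻¹) :
    ∃ δ > (0:ℝ), ∃ C : ℝ, ∀ R ∈ Set.Ioo (0:ℝ) δ,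
      |(r R - R - R^2 * Real.log R) / R^2| ≤ C := by
  refine ⟨1 / 4, by norm_num, 12, fun R ⟨hR0, hR⟩ ↦ ?_⟩
  have hF_approx : |F R - (R⁻¹ - log R)| ≤ 2 := by
    rw [hF]
    exact abs_integral_exp_div_sq_sub_le hR0 (by linarith)
  rw [hr, abs_div, abs_of_pos (by positivity : (0 : ℝ) < R ^ 2), div_le_iff₀ (by positivity)]
  exact abs_inv_sub_sub_sq_mul_log_le hR0 hR.le hF_approx
end

section
/- For every real number a there exists ε > 0 such that u_a > 0 on (0,ε), and on (0,ε) the function r_a = 1/u_a is twice differentiable and solves the gauge transformation ODE r_a″(x) = −r_a′(x)·(2/x + 1) + (2/r_a(x))·r_a′(x)². -/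
open Real Filter MeasureTheory Set Topology

noncomputable section

/-- `Eineg x = Ei(−x) = −∫_x^∞ e^{−t}/t dt`, the exponential integral. -/
def Eineg (x : ℝ) : ℝ := -∫ t in Set.Ioi x, Real.exp (-t) / t

/-- `u_a(x) = e^{−x}/x + a + Ei(−x)` for `x > 0`. -/
def u (a x : ℝ) : ℝ := Real.exp (-x) / x + a + Eineg x

/-- `r_a(x) = 1/u_a(x)` (meaningful on intervals where `u_a > 0`). -/
def rga (a x : ℝ) : ℝ := (u a x)⁻¹

lemma f_int {x : ℝ} (hx : 0 < x) :
    IntegrableOn (fun t => Real.exp (-t) / t) (Set.Ioi x) := by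
  refine Integrable.mono' (g := fun t => Real.exp (-t) / x)
    ((exp_neg_integrableOn_Ioi x one_pos).congr_fun (fun t _ => by norm_num) measurableSet_Ioi |>.div_const x)
    ?_ ?_
  · exact (Measurable.div (by fun_prop) measurable_id).aestronglyMeasurable
  · filter_upwards [ae_restrict_mem measurableSet_Ioi] with t ht
    rw [Real.norm_eq_abs, abs_div, abs_of_pos (exp_pos _), abs_of_pos (hx.trans ht)]
    exact div_le_div_of_nonneg_left (exp_pos _).le hx ht.le

lemma intInt {x y : ℝ} (hx : 0 < x) (hy : 0 < y) :
    IntervalIntegrable (fun t => Real.exp (-t) / t) volume y x := by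
  apply ContinuousOn.intervalIntegrable
  apply ContinuousOn.div (by fun_prop) continuousOn_id
  intro t ht
  exact ne_of_gt (lt_of_lt_of_le (lt_min hy hx) ht.1)

lemma Eineg_eq {x : ℝ} (hx : 0 < x) :
    Eineg x = (∫ t in (1:ℝ)..x, Real.exp (-t) / t) - ∫ t in Set.Ioi (1:ℝ), Real.exp (-t) / t := by
  rcases le_total x 1 with h | h
  · have hs : ∫ t in Set.Ioi x, Real.exp (-t) / t
        = (∫ t in Set.Ioc x 1, Real.exp (-t) / t) + ∫ t in Set.Ioi (1:ℝ), Real.exp (-t) / t := by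
      rw [← setIntegral_union (Set.Ioc_disjoint_Ioi le_rfl) measurableSet_Ioi
        ((f_int hx).mono_set Set.Ioc_subset_Ioi_self) (f_int one_pos), Set.Ioc_union_Ioi_eq_Ioi h]
    have hiv : (∫ t in (1:ℝ)..x, Real.exp (-t) / t)
        = -∫ t in Set.Ioc x 1, Real.exp (-t) / t := by
      rw [intervalIntegral.integral_symm, intervalIntegral.integral_of_le h]
    rw [Eineg, hs, hiv]; ring
  · have hs : ∫ t in Set.Ioi (1:ℝ), Real.exp (-t) / t
        = (∫ t in Set.Ioc 1 x, Real.exp (-t) / t) + ∫ t in Set.Ioi x, Real.exp (-t) / t := by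
      rw [← setIntegral_union (Set.Ioc_disjoint_Ioi le_rfl) measurableSet_Ioi
        ((f_int one_pos).mono_set Set.Ioc_subset_Ioi_self) (f_int hx), Set.Ioc_union_Ioi_eq_Ioi h]
    have hiv : (∫ t in (1:ℝ)..x, Real.exp (-t) / t)
        = ∫ t in Set.Ioc 1 x, Real.exp (-t) / t := intervalIntegral.integral_of_le h
    rw [Eineg, hiv]; rw [hs]; ring

lemma hasDerivAt_Eineg {x : ℝ} (hx : 0 < x) :
    HasDerivAt Eineg (Real.exp (-x) / x) x := by
  have hc : ContinuousAt (fun t => Real.exp (-t) / t) x :=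
    ContinuousAt.div (by fun_prop) continuousAt_id (ne_of_gt hx)
  have h1 : HasDerivAt (fun y => ∫ t in (1:ℝ)..y, Real.exp (-t) / t) (Real.exp (-x)/x) x :=
    intervalIntegral.integral_hasDerivAt_right (intInt hx one_pos)
      (ContinuousOn.stronglyMeasurableAtFilter isOpen_Ioi (fun t (ht : t ∈ Set.Ioi (0:ℝ)) =>
        (Real.continuousOn_exp.comp continuousOn_neg (Set.mapsTo_univ _ _)).div continuousOn_id
          (fun s hs => ne_of_gt hs) t ht) x hx) hc
  exact (h1.sub_const _).congr_of_eventuallyEq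
    (eventually_of_mem (Ioi_mem_nhds hx) fun y hy => Eineg_eq hy)

lemma hasDerivAt_u (a : ℝ) {x : ℝ} (hx : 0 < x) :
    HasDerivAt (u a) (-(Real.exp (-x) / x^2)) x := by
  have h1 : HasDerivAt (fun y : ℝ => Real.exp (-y) / y)
      (((Real.exp (-x) * -1) * x - Real.exp (-x) * 1) / x ^ 2) x :=
    (((Real.hasDerivAt_exp (-x)).comp x (hasDerivAt_neg x)).div (hasDerivAt_id x) (ne_of_gt hx))
  have h2 := (h1.add_const a).add (hasDerivAt_Eineg hx)
  have h3 : HasDerivAt (u a)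
      ((((Real.exp (-x) * -1) * x - Real.exp (-x) * 1) / x ^ 2) + Real.exp (-x) / x) x := h2
  convert h3 using 1
  field_simp
  ring

lemma neg_Eineg_le {x : ℝ} (hx : 0 < x) (hx1 : x ≤ 1) :
    -Eineg x ≤ -Real.log x + Real.exp (-1) := by
  rw [Eineg, neg_neg]
  have hs : ∫ t in Set.Ioi x, Real.exp (-t) / t
      = (∫ t in Set.Ioc x 1, Real.exp (-t) / t) + ∫ t in Set.Ioi (1:ℝ), Real.exp (-t) / t := by
    rw [← setIntegral_union (Set.Ioc_disjoint_Ioi le_rfl) measurableSet_Ioi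
      ((f_int hx).mono_set Set.Ioc_subset_Ioi_self) (f_int one_pos), Set.Ioc_union_Ioi_eq_Ioi hx1]
  have hint1t : IntegrableOn (fun t : ℝ => 1 / t) (Set.Ioc x 1) := by
    apply (ContinuousOn.integrableOn_Icc ?_).mono_set Set.Ioc_subset_Icc_self
    exact ContinuousOn.div continuousOn_const continuousOn_id
      (fun t ht => ne_of_gt (lt_of_lt_of_le hx ht.1))
  have b1 : (∫ t in Set.Ioc x 1, Real.exp (-t) / t) ≤ ∫ t in Set.Ioc x 1, 1 / t := by
    apply setIntegral_mono_on ((f_int hx).mono_set Set.Ioc_subset_Ioi_self) hint1t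
      measurableSet_Ioc
    intro t ht
    gcongr
    · exact (lt_trans hx ht.1).le
    · exact Real.exp_le_one_iff.mpr (by linarith [lt_trans hx ht.1])
  have e1 : (∫ t in Set.Ioc x 1, (1:ℝ) / t) = -Real.log x := by
    rw [← intervalIntegral.integral_of_le hx1, integral_one_div]
    · rw [Real.log_div one_ne_zero (ne_of_gt hx), Real.log_one]; ring
    · intro h
      rcases Set.mem_uIcc.mp h with ⟨h1, _⟩ | ⟨_, h2⟩ <;> linarith
  have hexpint : IntegrableOn (fun t : ℝ => Real.exp (-t)) (Set.Ioi (1:ℝ)) :=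
    (exp_neg_integrableOn_Ioi 1 one_pos).congr_fun (fun t _ => by norm_num) measurableSet_Ioi
  have b2 : (∫ t in Set.Ioi (1:ℝ), Real.exp (-t) / t) ≤ ∫ t in Set.Ioi (1:ℝ), Real.exp (-t) := by
    apply setIntegral_mono_on (f_int one_pos) hexpint measurableSet_Ioi
    intro t ht
    exact div_le_self (Real.exp_pos _).le (le_of_lt ht)
  have e2 : (∫ t in Set.Ioi (1:ℝ), Real.exp (-t)) = Real.exp (-1) := integral_exp_neg_Ioi 1
  rw [hs]
  linarith

lemma u_pos_near (a : ℝ) : ∃ ε > (0:ℝ), ε ≤ 1 ∧ ∀ x ∈ Set.Ioo (0:ℝ) ε, 0 < u a x := by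
  set e1 := Real.exp (-1) with he1
  have he1pos : 0 < e1 := Real.exp_pos _
  have he1lt : e1 < 1 := Real.exp_lt_one_iff.mpr (by norm_num)
  have h2lt : Real.exp (-2) < 1 := Real.exp_lt_one_iff.mpr (by norm_num)
  refine ⟨min (Real.exp (-2) / 16) (e1 / (2 * (|a| + 2))), ?_, ?_, ?_⟩
  · exact lt_min (by positivity) (by positivity)
  · exact le_trans (min_le_left _ _) (by linarith)
  · intro x hx
    obtain ⟨hx0, hxlt⟩ := hx
    have hxa : x < Real.exp (-2) / 16 := lt_of_lt_of_le hxlt (min_le_left _ _)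
    have hxb : x < e1 / (2 * (|a| + 2)) := lt_of_lt_of_le hxlt (min_le_right _ _)
    have hx1 : x ≤ 1 := by nlinarith
    -- log bound via sqrt
    set s := Real.sqrt x with hs
    have hspos : 0 < s := Real.sqrt_pos.mpr hx0
    have hs2 : s ^ 2 = x := Real.sq_sqrt hx0.le
    have hlog : Real.log x = 2 * Real.log s := by
      rw [hs, Real.log_sqrt hx0.le]; ring
    have hlogs : Real.log s ≥ -(1/s - 1) := by
      have := Real.log_le_sub_one_of_pos (show 0 < 1/s by positivity)
      rw [Real.log_div one_ne_zero (ne_of_gt hspos), Real.log_one] at this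
      linarith
    have hdiv : (2:ℝ)/s = 2*(1/s) := by ring
    have hlogx : Real.log x ≥ -(2/s) := by
      rw [hlog, hdiv]
      linarith
    -- s small : 4 s ≤ e1
    have hse : 4 * s ≤ e1 := by
      have hsq : s ^ 2 < (e1/4) ^ 2 := by
        rw [hs2]
        have : e1 ^ 2 = Real.exp (-2) := by
          rw [he1, sq, ← Real.exp_add]; norm_num
        nlinarith
      have : s < e1 / 4 := by nlinarith
      linarith
    have h2s : 2 / s ≤ e1 / (2 * x) := by
      rw [div_le_div_iff₀ hspos (by positivity)]
      nlinarith
    -- exp(-x) ≥ e1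
    have hex : e1 ≤ Real.exp (-x) := Real.exp_le_exp.mpr (by linarith)
    -- Eineg bound
    have hE : Eineg x ≥ Real.log x - e1 := by
      have := neg_Eineg_le hx0 hx1
      linarith
    -- final
    have h1 : e1 / x ≤ Real.exp (-x) / x := by gcongr
    have h2 : e1 / (2 * x) > |a| + 2 := by
      rw [gt_iff_lt, lt_div_iff₀ (by positivity)]
      rw [lt_div_iff₀ (by positivity)] at hxb
      nlinarith
    have habs : -|a| ≤ a := neg_abs_le a
    have hhalf : e1 / x = e1 / (2*x) + e1 / (2*x) := by field_simp; ring
    rw [u]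
    nlinarith [hlogx, h2s]

/-- For every real `a` there is `ε > 0` with `u_a > 0` on `(0,ε)`, and there
`r_a = 1/u_a` is twice differentiable and solves the gauge transformation ODE
`r_a″(x) = −r_a′(x)(2/x + 1) + (2/r_a(x)) r_a′(x)²`. -/
theorem stmt_5 (a : ℝ) :
    ∃ ε > (0:ℝ),
      (∀ x ∈ Set.Ioo (0:ℝ) ε, 0 < u a x) ∧
      (∀ x ∈ Set.Ioo (0:ℝ) ε,
        DifferentiableAt ℝ (rga a) x ∧
        DifferentiableAt ℝ (deriv (rga a)) x ∧
        deriv (deriv (rga a)) x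
          = -(deriv (rga a) x) * (2/x + 1) + (2 / rga a x) * (deriv (rga a) x)^2) := by
  obtain ⟨ε, hε, hε1, hpos⟩ := u_pos_near a
  refine ⟨ε, hε, hpos, ?_⟩
  have hrd : ∀ x ∈ Set.Ioo (0:ℝ) ε,
      HasDerivAt (rga a) (Real.exp (-x) / (x^2 * (u a x)^2)) x := by
    intro x hx
    have h := (hasDerivAt_u a hx.1).inv (ne_of_gt (hpos x hx))
    have h2 : HasDerivAt (rga a) (-(-(Real.exp (-x) / x^2)) / u a x ^ 2) x := h
    convert h2 using 1
    rw [neg_neg, div_div]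
  have hderiv_eq : ∀ x ∈ Set.Ioo (0:ℝ) ε,
      deriv (rga a) x = Real.exp (-x) / (x^2 * (u a x)^2) :=
    fun x hx => (hrd x hx).deriv
  intro x hx
  have hx0 : 0 < x := hx.1
  have hu0 : u a x ≠ 0 := ne_of_gt (hpos x hx)
  have hxne : x ≠ 0 := ne_of_gt hx0
  refine ⟨(hrd x hx).differentiableAt, ?_⟩
  -- second derivative
  have hw : HasDerivAt (fun y => y^2 * (u a y)^2)
      ((2*x^1) * (u a x)^2 + x^2 * (2 * u a x ^ 1 * (-(Real.exp (-x) / x^2)))) x :=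
    (hasDerivAt_pow 2 x).mul ((hasDerivAt_u a hx0).pow 2)
  have hnum : HasDerivAt (fun y : ℝ => Real.exp (-y)) (Real.exp (-x) * -1) x :=
    (Real.hasDerivAt_exp (-x)).comp x (hasDerivAt_neg x)
  have hwne : x^2 * (u a x)^2 ≠ 0 := by positivity
  have hv : HasDerivAt (fun y => Real.exp (-y) / (y^2 * (u a y)^2))
      ((Real.exp (-x) * -1 * (x^2 * (u a x)^2) - Real.exp (-x) *
        ((2*x^1) * (u a x)^2 + x^2 * (2 * u a x ^ 1 * (-(Real.exp (-x) / x^2))))) /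
        (x^2 * (u a x)^2)^2) x := hnum.div hw hwne
  have hev : deriv (rga a) =ᶠ[𝓝 x] fun y => Real.exp (-y) / (y^2 * (u a y)^2) :=
    eventually_of_mem (isOpen_Ioo.mem_nhds hx) hderiv_eq
  have hd2 : HasDerivAt (deriv (rga a))
      ((Real.exp (-x) * -1 * (x^2 * (u a x)^2) - Real.exp (-x) *
        ((2*x^1) * (u a x)^2 + x^2 * (2 * u a x ^ 1 * (-(Real.exp (-x) / x^2))))) /
        (x^2 * (u a x)^2)^2) x := hv.congr_of_eventuallyEq hev
  refine ⟨hd2.differentiableAt, ?_⟩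
  rw [hd2.deriv, hderiv_eq x hx, rga]
  field_simp
  ring
end
end

section
/- For every real number a, lim_{x→0⁺} ( r_a(x) − x + x² log x ) / x² = 1 − γ − a, where γ is the Euler–Mascheroni constant. (In the paper's notation: r = r̃ − r̃² log r̃ + (1 − γ − a) r̃² + o(r̃²) as r̃ → 0⁺; in particular the gauge transformation is polyhomogeneous at the critical set I⁻.) -/
/-!
With `k(t) = e^{-t} - 1_{(0,1]}(t)`, one has
`∫_0^∞ k(t) t^{s-1} dt = Γ(s) - 1/s = (Γ(1+s) - Γ(1))/s` for `s > 0`, so letting `s → 0⁺`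
(dominated convergence) gives `∫_0^∞ k(t)/t dt = Γ'(1) = -γ`. For `0 < x ≤ 1` one has
`Ei(-x) - log x = -∫_x^∞ k(t)/t dt`, hence `Ei(-x) - log x → γ` and
`u_a(x) = 1/x + log x + (a + γ - 1) + o(1)`. Inverting `1/x + log x + c + o(1)` gives
`x - x² log x - c x² + o(x²)`.
-/

open Real Filter

noncomputable section

open MeasureTheory Set Topology

def expNegSubIndicator (t : ℝ) : ℝ := exp (-t) - (Ioc 0 1).indicator 1 t

lemma measurable_expNegSubIndicator : Measurable expNegSubIndicator :=
  (measurable_exp.comp measurable_neg).sub (measurable_const.indicator measurableSet_Ioc)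

lemma norm_expNegSubIndicator_mul_rpow_le {s t : ℝ} (hs₀ : 0 ≤ s) (hs₁ : s ≤ 1)
    (ht : 0 < t) :
    ‖expNegSubIndicator t * t ^ (s - 1)‖ ≤ (Ioc 0 1).indicator 1 t + exp (-t) := by
  have hpow : 0 ≤ t ^ (s - 1) := rpow_nonneg ht.le _
  rw [norm_mul, norm_of_nonneg hpow, Real.norm_eq_abs, expNegSubIndicator]
  rcases le_or_gt t 1 with ht₁ | ht₁
  · have hmem : t ∈ Ioc 0 1 := ⟨ht, ht₁⟩
    simp only [indicator_of_mem hmem, Pi.one_apply]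
    have habs : |exp (-t) - 1| ≤ t := by
      rw [abs_sub_comm, abs_of_nonneg (sub_nonneg.mpr (exp_le_one_iff.mpr (by linarith)))]
      linarith [add_one_le_exp (-t)]
    calc |exp (-t) - 1| * t ^ (s - 1) ≤ t * t ^ (s - 1) := by gcongr
      _ = t ^ s := by rw [rpow_sub_one ht.ne', mul_div_cancel₀ _ ht.ne']
      _ ≤ 1 := rpow_le_one ht.le ht₁ hs₀
      _ ≤ 1 + exp (-t) := by linarith [exp_pos (-t)]
  · have hmem : t ∉ Ioc 0 1 := fun h => h.2.not_gt ht₁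
    simp only [indicator_of_notMem hmem, sub_zero, zero_add, abs_of_pos (exp_pos _)]
    exact mul_le_of_le_one_right (exp_pos _).le
      (rpow_le_one_of_one_le_of_nonpos ht₁.le (by linarith))

lemma integrableOn_indicator_add_exp_neg :
    IntegrableOn (fun t : ℝ => (Ioc 0 1).indicator 1 t + exp (-t)) (Ioi 0) :=
  (((integrableOn_const (by simp)).integrable_indicator measurableSet_Ioc).integrableOn).add
    (by simpa using exp_neg_integrableOn_Ioi 0 one_pos)

lemma integrableOn_expNegSubIndicator_mul_rpow {s : ℝ} (hs₀ : 0 ≤ s) (hs₁ : s ≤ 1) :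
    IntegrableOn (fun t => expNegSubIndicator t * t ^ (s - 1)) (Ioi 0) := by
  refine integrableOn_indicator_add_exp_neg.mono'
    (measurable_expNegSubIndicator.mul (by fun_prop)).aestronglyMeasurable ?_
  filter_upwards [ae_restrict_mem measurableSet_Ioi] with t ht
  exact norm_expNegSubIndicator_mul_rpow_le hs₀ hs₁ ht

lemma Gamma_sub_inv_eq_integral {s : ℝ} (hs : 0 < s) :
    Gamma s - 1 / s = ∫ t in Ioi 0, expNegSubIndicator t * t ^ (s - 1) := by
  have hpow : IntegrableOn (fun t : ℝ => t ^ (s - 1)) (Ioc 0 1) :=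
    (intervalIntegrable_iff_integrableOn_Ioc_of_le zero_le_one).mp
      (intervalIntegral.intervalIntegrable_rpow' (by linarith))
  have hsplit : (fun t => expNegSubIndicator t * t ^ (s - 1))
      = fun t => exp (-t) * t ^ (s - 1) - (Ioc 0 1).indicator (fun t => t ^ (s - 1)) t := by
    ext t
    by_cases ht : t ∈ Ioc 0 1 <;> simp [expNegSubIndicator, ht, sub_mul]
  have hpow_integral : ∫ t in Ioc 0 1, t ^ (s - 1) = 1 / s := by
    rw [← intervalIntegral.integral_of_le zero_le_one, integral_rpow (Or.inl (by linarith)),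
      sub_add_cancel, one_rpow, zero_rpow hs.ne', sub_zero]
  rw [hsplit, integral_sub (GammaIntegral_convergent hs)
      ((hpow.integrable_indicator measurableSet_Ioc).integrableOn),
    setIntegral_indicator measurableSet_Ioc, inter_eq_right.mpr Ioc_subset_Ioi_self,
    hpow_integral, Gamma_eq_integral hs]

lemma tendsto_integral_expNegSubIndicator_mul_rpow :
    Tendsto (fun s : ℝ => ∫ t in Ioi 0, expNegSubIndicator t * t ^ (s - 1)) (𝓝[>] 0)
      (𝓝 (∫ t in Ioi 0, expNegSubIndicator t / t)) := by
  have hlim : ∀ t ∈ Ioi (0 : ℝ), Tendsto (fun s : ℝ => expNegSubIndicator t * t ^ (s - 1))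
      (𝓝[>] 0) (𝓝 (expNegSubIndicator t / t)) := by
    intro t ht
    have hcont : ContinuousAt (fun s : ℝ => t ^ (s - 1)) 0 :=
      continuousAt_const.rpow (continuousAt_id.sub continuousAt_const) (Or.inl ht.ne')
    have := (hcont.tendsto.mono_left (nhdsWithin_le_nhds (s := Ioi 0))).const_mul
      (expNegSubIndicator t)
    rwa [zero_sub, rpow_neg_one, ← div_eq_mul_inv] at this
  refine tendsto_integral_filter_of_dominated_convergence _ ?_ ?_
    integrableOn_indicator_add_exp_neg ?_
  · exact Eventually.of_forall fun s =>
      (measurable_expNegSubIndicator.mul (by fun_prop)).aestronglyMeasurable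
  · filter_upwards [Ioo_mem_nhdsGT one_pos] with s hs
    filter_upwards [ae_restrict_mem measurableSet_Ioi] with t ht
    exact norm_expNegSubIndicator_mul_rpow_le hs.1.le hs.2.le ht
  · filter_upwards [ae_restrict_mem measurableSet_Ioi] using hlim

lemma tendsto_Gamma_sub_inv_nhdsGT_zero :
    Tendsto (fun s => Gamma s - 1 / s) (𝓝[>] 0) (𝓝 (-eulerMascheroniConstant)) := by
  refine hasDerivAt_Gamma_one.tendsto_slope_zero_right.congr' ?_
  filter_upwards [self_mem_nhdsWithin] with s hs
  rw [add_comm, Gamma_add_one (ne_of_gt hs), Gamma_one, smul_eq_mul, mul_sub,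
    inv_mul_cancel_left₀ (ne_of_gt hs), mul_one, one_div]

lemma integral_expNegSubIndicator_div :
    ∫ t in Ioi 0, expNegSubIndicator t / t = -eulerMascheroniConstant := by
  have hGamma := tendsto_Gamma_sub_inv_nhdsGT_zero.congr' <|
    eventually_mem_nhdsWithin.mono fun s hs => Gamma_sub_inv_eq_integral hs
  exact tendsto_nhds_unique tendsto_integral_expNegSubIndicator_mul_rpow hGamma

lemma integrableOn_exp_neg_div_Ioi {x : ℝ} (hx : 0 < x) :
    IntegrableOn (fun t => exp (-t) / t) (Ioi x) := by
  have hdom : IntegrableOn (fun t => exp (-t) / x) (Ioi x) := by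
    simpa [IntegrableOn] using (exp_neg_integrableOn_Ioi x one_pos).div_const x
  refine hdom.mono' (by fun_prop : Measurable fun t => exp (-t) / t).aestronglyMeasurable ?_
  filter_upwards [ae_restrict_mem measurableSet_Ioi] with t (ht : x < t)
  rw [norm_of_nonneg (div_nonneg (exp_pos _).le (hx.trans ht).le)]
  exact div_le_div_of_nonneg_left (exp_pos _).le hx ht.le

lemma Eineg_sub_log_eq_neg_integral {x : ℝ} (hx : 0 < x) (hx₁ : x ≤ 1) :
    Eineg x - log x = -∫ t in Ioi x, expNegSubIndicator t / t := by
  have hinter : Ioc 0 1 ∩ Ioi x = Ioc x 1 := by rw [Ioc_inter_Ioi, max_eq_right hx.le]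
  have hinv : IntervalIntegrable (fun t : ℝ => t⁻¹) volume x 1 :=
    intervalIntegrable_inv_iff.mpr (Or.inr (notMem_uIcc_of_lt hx one_pos))
  have hsplit : (fun t => expNegSubIndicator t / t)
      = fun t => exp (-t) / t - (Ioc 0 1).indicator (fun t => t⁻¹) t := by
    ext t
    by_cases ht : t ∈ Ioc 0 1 <;> simp [expNegSubIndicator, ht, sub_mul, div_eq_mul_inv]
  rw [hsplit, integral_sub (integrableOn_exp_neg_div_Ioi hx)
      ((integrableOn_indicator_iff measurableSet_Ioc).mpr
        (hinter ▸ (intervalIntegrable_iff_integrableOn_Ioc_of_le hx₁).mp hinv)),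
    setIntegral_indicator measurableSet_Ioc, inter_comm, hinter,
    ← intervalIntegral.integral_of_le hx₁, integral_inv_of_pos hx one_pos,
    log_div one_ne_zero hx.ne', log_one, Eineg]
  ring

lemma tendsto_setIntegral_Ioi_nhdsGT {E : Type*} [NormedAddCommGroup E] [NormedSpace ℝ E]
    {f : ℝ → E} {a : ℝ} (hf : IntegrableOn f (Ioi a)) :
    Tendsto (fun x => ∫ t in Ioi x, f t) (𝓝[>] a) (𝓝 (∫ t in Ioi a, f t)) := by
  have hind : ∀ᶠ x in 𝓝[>] a,
      ∫ t in Ioi a, (Ioi x).indicator f t = ∫ t in Ioi x, f t := by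
    filter_upwards [self_mem_nhdsWithin] with x (hx : a < x)
    rw [setIntegral_indicator measurableSet_Ioi, inter_eq_right.mpr (Ioi_subset_Ioi hx.le)]
  refine Tendsto.congr' hind (tendsto_integral_filter_of_dominated_convergence (‖f ·‖)
    (Eventually.of_forall fun x => hf.aestronglyMeasurable.indicator measurableSet_Ioi)
    (Eventually.of_forall fun x => Eventually.of_forall fun t => norm_indicator_le_norm_self _ _)
    hf.norm ?_)
  filter_upwards [ae_restrict_mem measurableSet_Ioi] with t (ht : a < t)
  refine tendsto_const_nhds.congr' ?_
  filter_upwards [Ioo_mem_nhdsGT ht] with x hx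
  exact (indicator_of_mem hx.2 f).symm

lemma tendsto_Eineg_sub_log :
    Tendsto (fun x => Eineg x - log x) (𝓝[>] 0) (𝓝 eulerMascheroniConstant) := by
  have hint : IntegrableOn (fun t => expNegSubIndicator t / t) (Ioi 0) := by
    simpa [rpow_neg_one, div_eq_mul_inv] using
      integrableOn_expNegSubIndicator_mul_rpow le_rfl zero_le_one
  have hlim := (tendsto_setIntegral_Ioi_nhdsGT hint).neg
  rw [integral_expNegSubIndicator_div, neg_neg] at hlim
  refine hlim.congr' ?_
  filter_upwards [Ioo_mem_nhdsGT one_pos] with x hx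
  exact (Eineg_sub_log_eq_neg_integral hx.1 hx.2.le).symm

lemma tendsto_exp_neg_sub_one_div :
    Tendsto (fun x => (exp (-x) - 1) / x) (𝓝[>] 0) (𝓝 (-1)) := by
  have := (hasDerivAt_neg (0 : ℝ)).exp.tendsto_slope_zero_right
  simpa [div_eq_inv_mul] using this

lemma tendsto_u_sub_inv_sub_log (a : ℝ) :
    Tendsto (fun x => u a x - x⁻¹ - log x) (𝓝[>] 0)
      (𝓝 (a + eulerMascheroniConstant - 1)) := by
  have := (tendsto_exp_neg_sub_one_div.const_add a).add tendsto_Eineg_sub_log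
  rw [show a + eulerMascheroniConstant - 1 = a + -1 + eulerMascheroniConstant by ring]
  refine this.congr fun x => ?_
  rw [u]
  ring

lemma tendsto_mul_log : Tendsto (fun x => x * log x) (𝓝[>] 0) (𝓝 0) := by
  simpa [mul_comm] using tendsto_log_mul_rpow_nhdsGT_zero one_pos

lemma tendsto_mul_log_sq : Tendsto (fun x => x * log x ^ 2) (𝓝[>] 0) (𝓝 0) := by
  have := (tendsto_log_mul_rpow_nhdsGT_zero (one_half_pos (α := ℝ))).pow 2
  rw [zero_pow two_ne_zero] at this
  refine this.congr' ?_
  filter_upwards [self_mem_nhdsWithin] with x (hx : 0 < x)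
  rw [← sqrt_eq_rpow, mul_pow, sq_sqrt hx.le, mul_comm]

lemma inv_inv_add_add_sub_div_sq {x L v : ℝ} (hx : x ≠ 0) (hw : 1 + x * L + x * v ≠ 0) :
    ((x⁻¹ + L + v)⁻¹ - x + x ^ 2 * L) / x ^ 2
      = (x * L ^ 2 + x * L * v - v) / (1 + x * L + x * v) := by
  have hsum : x⁻¹ + L + v = (1 + x * L + x * v) / x := by field_simp
  rw [hsum, inv_div]
  field_simp
  ring

lemma tendsto_inv_inv_add_log_add_sub_div_sq {v : ℝ → ℝ} {c : ℝ}
    (hv : Tendsto v (𝓝[>] 0) (𝓝 c)) :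
    Tendsto (fun x => ((x⁻¹ + log x + v x)⁻¹ - x + x ^ 2 * log x) / x ^ 2) (𝓝[>] 0)
      (𝓝 (-c)) := by
  have hid : Tendsto (fun x : ℝ => x) (𝓝[>] 0) (𝓝 0) := nhdsWithin_le_nhds
  have hnum : Tendsto (fun x => x * log x ^ 2 + x * log x * v x - v x) (𝓝[>] 0) (𝓝 (-c)) := by
    simpa using (tendsto_mul_log_sq.add (tendsto_mul_log.mul hv)).sub hv
  have hden : Tendsto (fun x => 1 + x * log x + x * v x) (𝓝[>] 0) (𝓝 1) := by
    simpa using (tendsto_mul_log.const_add 1).add (hid.mul hv)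
  refine (div_one (-c) ▸ hnum.div hden one_ne_zero).congr' ?_
  filter_upwards [self_mem_nhdsWithin, hden.eventually_ne one_ne_zero] with x (hx : 0 < x) hw
  exact (inv_inv_add_add_sub_div_sq hx.ne' hw).symm

/-- For every real `a`, `lim_{x→0⁺} (r_a(x) − x + x² log x)/x² = 1 − γ − a`:
`r = r̃ − r̃² log r̃ + (1 − γ − a) r̃² + o(r̃²)` as `r̃ → 0⁺`. -/
theorem stmt_7 (a : ℝ) :
    Filter.Tendsto (fun x => (rga a x - x + x^2 * Real.log x) / x^2)
      (nhdsWithin 0 (Set.Ioi 0))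
      (nhds (1 - Real.eulerMascheroniConstant - a)) := by
  have := tendsto_inv_inv_add_log_add_sub_div_sq (tendsto_u_sub_inv_sub_log a)
  rw [show -(a + eulerMascheroniConstant - 1) = 1 - eulerMascheroniConstant - a by ring] at this
  refine this.congr fun x => ?_
  rw [rga, show x⁻¹ + log x + (u a x - x⁻¹ - log x) = u a x by ring]
end
end

section
/- Let k > 0, ε > 0, let g : [0,ε) → ℝ be continuous, and let f : (0,ε) → ℝ be a bounded differentiable function satisfying f′(x) + (k/x)·f(x) = g(x) for all x ∈ (0,ε). Then lim_{x→0⁺} f(x)/x = g(0)/(k+1); in particular f extends continuously to 0 with f(0) = 0 and f(x) = (g(0)/(k+1))·x + o(x) as x → 0⁺. -/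
open Real Filter Set Topology

/-! With the integrating factor `x ^ k`, the equation reads `(x ^ k f)' = x ^ k g`. Since `f` is
bounded and `k > 0`, both `x ^ k f(x)` and `x ^ (k + 1)` tend to `0` as `x → 0⁺`, so by
l'Hôpital's rule `f(x) / x = x ^ k f(x) / x ^ (k + 1)` has the same limit as
`x ^ k g(x) / ((k + 1) x ^ k) = g(x) / (k + 1)`, namely `g(0) / (k + 1)`. -/

lemma hasDerivAt_rpow_mul_of_hasDerivAt_sub_div_mul {k x : ℝ} {f g : ℝ → ℝ} (hx : 0 < x)
    (hf : HasDerivAt f (g x - (k / x) * f x) x) :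
    HasDerivAt (fun y => y ^ k * f y) (x ^ k * g x) x := by
  refine ((hasDerivAt_rpow_const (p := k) (Or.inl hx.ne')).mul hf).congr_deriv ?_
  rw [rpow_sub_one hx.ne']
  field_simp
  ring

lemma tendsto_rpow_nhdsGT_zero {p : ℝ} (hp : 0 < p) :
    Tendsto (fun x : ℝ => x ^ p) (𝓝[>] 0) (𝓝 0) := by
  simpa [zero_rpow hp.ne'] using
    (continuousAt_rpow_const 0 p (Or.inr hp.le)).tendsto.mono_left nhdsWithin_le_nhds

lemma tendsto_rpow_mul_nhdsGT_zero {k : ℝ} {f : ℝ → ℝ} (hk : 0 < k)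
    (hf : IsBoundedUnder (· ≤ ·) (𝓝[>] 0) (norm ∘ f)) :
    Tendsto (fun x => x ^ k * f x) (𝓝[>] 0) (𝓝 0) :=
  (tendsto_rpow_nhdsGT_zero hk).zero_mul_isBoundedUnder_le hf

lemma tendsto_div_self_of_hasDerivAt_sub_div_mul {k ε c : ℝ} {f g : ℝ → ℝ} (hk : 0 < k)
    (hε : 0 < ε) (hODE : ∀ x ∈ Ioo 0 ε, HasDerivAt f (g x - (k / x) * f x) x)
    (hf : IsBoundedUnder (· ≤ ·) (𝓝[>] 0) (norm ∘ f)) (hg : Tendsto g (𝓝[>] 0) (𝓝 c)) :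
    Tendsto (fun x => f x / x) (𝓝[>] 0) (𝓝 (c / (k + 1))) := by
  have hk1 : k + 1 ≠ 0 := by linarith
  have hquot : Tendsto (fun x => x ^ k * f x / x ^ (k + 1)) (𝓝[>] 0) (𝓝 (c / (k + 1))) := by
    refine HasDerivAt.lhopital_zero_right_on_Ioo hε
      (fun x hx => hasDerivAt_rpow_mul_of_hasDerivAt_sub_div_mul hx.1 (hODE x hx))
      (fun x hx => hasDerivAt_rpow_const (Or.inl hx.1.ne')) (fun x hx => ?_)
      (tendsto_rpow_mul_nhdsGT_zero hk hf) (tendsto_rpow_nhdsGT_zero (by linarith)) ?_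
    · simp [(rpow_pos_of_pos hx.1 k).ne', hk1]
    · refine (hg.div_const (k + 1)).congr' ?_
      filter_upwards [self_mem_nhdsWithin] with x (hx : 0 < x)
      rw [add_sub_cancel_right, mul_comm (k + 1), mul_div_mul_left _ _ (rpow_pos_of_pos hx k).ne']
  refine hquot.congr' ?_
  filter_upwards [self_mem_nhdsWithin] with x (hx : 0 < x)
  rw [rpow_add_one hx.ne', mul_div_mul_left _ _ (rpow_pos_of_pos hx k).ne']

/-- If `k > 0`, `g` is continuous on `[0,ε)` and `f` is bounded and differentiable
on `(0,ε)` with `f′(x) + (k/x) f(x) = g(x)`, then `f(x)/x → g(0)/(k+1)` as `x → 0⁺`;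
in particular `f` extends continuously to `0` with `f(0) = 0`, and
`f(x) = (g(0)/(k+1)) x + o(x)`. -/
theorem stmt_13 (k ε : ℝ) (hk : 0 < k) (hε : 0 < ε) (g f : ℝ → ℝ)
    (hg : ContinuousOn g (Set.Ico 0 ε))
    (hbdd : ∃ C : ℝ, ∀ x ∈ Set.Ioo (0:ℝ) ε, |f x| ≤ C)
    (hODE : ∀ x ∈ Set.Ioo (0:ℝ) ε, HasDerivAt f (g x - (k / x) * f x) x) :
    Filter.Tendsto (fun x => f x / x) (nhdsWithin 0 (Set.Ioi 0))
      (nhds (g 0 / (k + 1))) ∧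
    Filter.Tendsto f (nhdsWithin 0 (Set.Ioi 0)) (nhds 0) := by
  obtain ⟨C, hC⟩ := hbdd
  have hf : IsBoundedUnder (· ≤ ·) (𝓝[>] 0) (norm ∘ f) :=
    ⟨C, eventually_map.2 <| eventually_of_mem (Ioo_mem_nhdsGT hε) hC⟩
  have hg0 : Tendsto g (𝓝[>] 0) (𝓝 (g 0)) :=
    (hg 0 ⟨le_rfl, hε⟩).tendsto.mono_left <| nhdsWithin_le_of_mem <|
      mem_of_superset (Ioo_mem_nhdsGT hε) Ioo_subset_Ico_self
  have hdiv := tendsto_div_self_of_hasDerivAt_sub_div_mul hk hε hODE hf hg0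
  refine ⟨hdiv, ?_⟩
  simpa using (hdiv.mul (tendsto_id.mono_left nhdsWithin_le_nhds)).congr' <| by
    filter_upwards [self_mem_nhdsWithin] with x (hx : 0 < x)
    exact div_mul_cancel₀ _ hx.ne'
end
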